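/- (Concentration near vertices of a pure-state polytope) Let D ≥ 2 and let ψ₁, …, ψ_m ∈ ℂ^D be unit vectors, and let P = conv{ψ₁ψ₁ᴴ, …, ψ_mψ_mᴴ} be the convex hull of the corresponding rank-one projections. Then there exists ε* > 0 such that for every unit vector ψ ∈ ℂ^D with ε := min_{σ ∈ P} T(ψψᴴ, σ) satisfying ε ≤ ε*, and every λ ∈ [1/2, 1] with h(λ) = f(ε, D), there exists an index j such that T(ψψᴴ, ψ_jψ_jᴴ) ≤ ε + 2√(1 − λ). -/

import Mathlib

open ComplexOrder

noncomputable def traceNorm {n : Type*} [Fintype n] [DecidableEq n]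
    (A : Matrix n n ℂ) : ℝ :=
  (((Matrix.posSemidef_conjTranspose_mul_self A).1.eigenvectorUnitary : Matrix n n ℂ) *
    Matrix.diagonal ((fun x : ℝ => (x : ℂ)) ∘ Real.sqrt ∘ (Matrix.posSemidef_conjTranspose_mul_self A).1.eigenvalues) *
    (star ((Matrix.posSemidef_conjTranspose_mul_self A).1.eigenvectorUnitary : Matrix n n ℂ))).trace.re

/-- Trace distance between matrices: half the trace norm of the difference. -/
noncomputable def traceDist {n : Type*} [Fintype n] [DecidableEq n]
    (ρ σ : Matrix n n ℂ) : ℝ :=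
  traceNorm (ρ - σ) / 2

/-- A density matrix: positive semidefinite with trace one. -/
def IsDensityMatrix {n : Type*} [Fintype n] [DecidableEq n]
    (ρ : Matrix n n ℂ) : Prop :=
  ρ.PosSemidef ∧ ρ.trace = 1

/-- Binary entropy (base 2). -/
noncomputable def binEntropy (t : ℝ) : ℝ :=
  -t * Real.logb 2 t - (1 - t) * Real.logb 2 (1 - t)

/-- The Fannes error f(t, D) = t·log₂(D−1) + h(t). -/
noncomputable def fannesError (t : ℝ) (D : ℕ) : ℝ :=
  t * Real.logb 2 ((D : ℝ) - 1) + binEntropy t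

/-- Rank-one (outer-product) matrix ψψᴴ associated to a vector ψ. -/
noncomputable def outer {n : Type*} (ψ : n → ℂ) : Matrix n n ℂ :=
  Matrix.of fun i j => ψ i * star (ψ j)

namespace ConcAux
set_option linter.unusedSectionVars false

open Matrix

variable {n : Type*} [Fintype n] [DecidableEq n]

/-- mixed outer product -/
noncomputable def ou (x y : n → ℂ) : Matrix n n ℂ := Matrix.of fun i j => x i * star (y j)

lemma outer_eq_ou (x : n → ℂ) : outer x = ou x x := rfl

lemma star_dot (x y : n → ℂ) : star (star x ⬝ᵥ y) = star y ⬝ᵥ x := by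
  simp only [dotProduct, star_sum, star_mul', star_star, Pi.star_apply]
  exact Finset.sum_congr rfl fun i _ => mul_comm _ _

lemma ou_mul_ou (a b c d : n → ℂ) : ou a b * ou c d = (star b ⬝ᵥ c) • ou a d := by
  ext i j
  simp only [ou, Matrix.mul_apply, Matrix.of_apply, Matrix.smul_apply, dotProduct, Pi.star_apply,
    smul_eq_mul, Finset.sum_mul]
  exact Finset.sum_congr rfl fun k _ => by ring

lemma ou_mulVec (x y v : n → ℂ) : ou x y *ᵥ v = (star y ⬝ᵥ v) • x := by
  ext i
  simp only [ou, Matrix.mulVec, dotProduct, Matrix.of_apply, Pi.smul_apply, smul_eq_mul, Pi.star_apply,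
    Finset.sum_mul]
  exact Finset.sum_congr rfl fun k _ => by ring

lemma trace_ou (x y : n → ℂ) : (ou x y).trace = star y ⬝ᵥ x := by
  simp only [Matrix.trace, Matrix.diag, ou, Matrix.of_apply, dotProduct]
  exact Finset.sum_congr rfl fun i _ => mul_comm _ _

lemma ou_hermitian (x : n → ℂ) : (ou x x).IsHermitian := by
  ext i j
  simp only [Matrix.conjTranspose_apply, ou, Matrix.of_apply, star_mul', star_star]
  ring

lemma outer_posSemidef (x : n → ℂ) : (outer x).PosSemidef := by
  refine Matrix.PosSemidef.of_dotProduct_mulVec_nonneg (ou_hermitian x) fun v => ?_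
  rw [outer_eq_ou, ou_mulVec, dotProduct_smul, smul_eq_mul, mul_comm, ← star_dot x v]
  exact star_mul_self_nonneg _


section spectral

lemma traceNorm_eq_of_sqrt {A S : Matrix n n ℂ} (hS : S.PosSemidef) (h : S ^ 2 = Aᴴ * A) :
    traceNorm A = S.trace.re := by
  have hB := (Matrix.posSemidef_conjTranspose_mul_self A).1
  have e : traceNorm A = (cfc Real.sqrt (Aᴴ * A)).trace.re := by
    rw [hB.cfc_eq]; rfl
  have hS' : cfc (fun x : ℝ => Real.sqrt (x ^ 2)) S = S := by
    conv_rhs => rw [← cfc_id' ℝ S (ha := hS.1)]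
    refine cfc_congr fun x hx => ?_
    have hx0 : 0 ≤ x := by
      rw [hS.1.spectrum_real_eq_range_eigenvalues] at hx
      obtain ⟨i, rfl⟩ := hx
      exact hS.eigenvalues_nonneg i
    simp [Real.sqrt_sq hx0]
  rw [e, ← h]
  have hc := cfc_comp_pow Real.sqrt 2 S (ha := hS.1)
  rw [hS'] at hc
  exact congrArg (fun M : Matrix n n ℂ => M.trace.re) hc.symm

variable {A : Matrix n n ℂ} (hA : A.IsHermitian)

lemma conj_key :
    ∀ E F : Matrix n n ℂ,
      ((hA.eigenvectorUnitary : Matrix n n ℂ) * E * star (hA.eigenvectorUnitary : Matrix n n ℂ)) *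
      ((hA.eigenvectorUnitary : Matrix n n ℂ) * F * star (hA.eigenvectorUnitary : Matrix n n ℂ)) =
      (hA.eigenvectorUnitary : Matrix n n ℂ) * (E * F) *
        star (hA.eigenvectorUnitary : Matrix n n ℂ) := by
  intro E F
  set U : Matrix n n ℂ := (hA.eigenvectorUnitary : Matrix n n ℂ)
  have hU2 : star U * U = 1 := Matrix.mem_unitaryGroup_iff'.mp hA.eigenvectorUnitary.2
  have h1 : U * E * star U * (U * F * star U) = U * E * (star U * U) * (F * star U) := by
    simp only [Matrix.mul_assoc]
  rw [h1, hU2, Matrix.mul_one]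
  simp only [Matrix.mul_assoc]

lemma trace_conj_diag (d : n → ℂ) :
    ((hA.eigenvectorUnitary : Matrix n n ℂ) * Matrix.diagonal d *
      star (hA.eigenvectorUnitary : Matrix n n ℂ)).trace = ∑ i, d i := by
  set U : Matrix n n ℂ := (hA.eigenvectorUnitary : Matrix n n ℂ)
  have hU2 : star U * U = 1 := Matrix.mem_unitaryGroup_iff'.mp hA.eigenvectorUnitary.2
  rw [Matrix.trace_mul_cycle, hU2, Matrix.one_mul, Matrix.trace_diagonal]

lemma sum_eigenvalues_eq_trace : ∑ i, hA.eigenvalues i = A.trace.re := by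
  have h := congrArg Matrix.trace hA.spectral_theorem
  rw [Unitary.conjStarAlgAut_apply] at h
  rw [trace_conj_diag hA] at h
  rw [h]
  rw [Complex.re_sum]
  exact Finset.sum_congr rfl fun i _ => by
    simp [Function.comp]

lemma traceNorm_of_hermitian : traceNorm A = ∑ i, |hA.eigenvalues i| := by
  set U : Matrix n n ℂ := (hA.eigenvectorUnitary : Matrix n n ℂ) with hUdef
  set d : n → ℂ := fun i => ((|hA.eigenvalues i| : ℝ) : ℂ) with hd
  set S := U * Matrix.diagonal d * star U with hSdef
  have hdpos : (Matrix.diagonal d).PosSemidef := Matrix.posSemidef_diagonal_iff.mpr fun i => by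
    show (0 : ℂ) ≤ ((|hA.eigenvalues i| : ℝ) : ℂ)
    exact_mod_cast abs_nonneg (hA.eigenvalues i)
  have hS : S.PosSemidef := by
    have h := hdpos.mul_mul_conjTranspose_same U
    rwa [← Matrix.star_eq_conjTranspose] at h
  have hsq : S ^ 2 = Aᴴ * A := by
    calc S ^ 2 = U * (Matrix.diagonal d * Matrix.diagonal d) * star U := by
          rw [pow_two, hSdef, conj_key hA]
    _ = U * (Matrix.diagonal (RCLike.ofReal ∘ hA.eigenvalues) *
          Matrix.diagonal (RCLike.ofReal ∘ hA.eigenvalues)) * star U := by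
          rw [Matrix.diagonal_mul_diagonal, Matrix.diagonal_mul_diagonal]
          have hfun : (fun i => d i * d i)
              = (fun i => (RCLike.ofReal ∘ hA.eigenvalues) i * (RCLike.ofReal ∘ hA.eigenvalues) i) := by
            funext i
            show ((|hA.eigenvalues i| : ℝ) : ℂ) * ((|hA.eigenvalues i| : ℝ) : ℂ)
                = ((hA.eigenvalues i : ℝ) : ℂ) * ((hA.eigenvalues i : ℝ) : ℂ)
            norm_cast
            exact abs_mul_abs_self _
          rw [hfun]
    _ = (U * Matrix.diagonal (RCLike.ofReal ∘ hA.eigenvalues) * star U) *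
          (U * Matrix.diagonal (RCLike.ofReal ∘ hA.eigenvalues) * star U) :=
          (conj_key hA _ _).symm
    _ = Aᴴ * A := by
      have hsp := hA.spectral_theorem
      rw [Unitary.conjStarAlgAut_apply] at hsp
      rw [← hsp, hA.eq]
  rw [traceNorm_eq_of_sqrt hS hsq, hSdef, trace_conj_diag hA, Complex.re_sum]
  exact Finset.sum_congr rfl fun i _ => by rw [hd]; simp

lemma quadform_eq (ψ : n → ℂ) :
    ∃ t : n → ℝ, (∀ i, 0 ≤ t i) ∧ (∑ i, t i = (star ψ ⬝ᵥ ψ).re) ∧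
      (star ψ ⬝ᵥ A *ᵥ ψ).re = ∑ i, hA.eigenvalues i * t i := by
  set U : Matrix n n ℂ := (hA.eigenvectorUnitary : Matrix n n ℂ) with hUdef
  have hU1 : U * star U = 1 := Matrix.mem_unitaryGroup_iff.mp hA.eigenvectorUnitary.2
  set w : n → ℂ := star U *ᵥ ψ with hw
  refine ⟨fun i => Complex.normSq (w i), fun i => Complex.normSq_nonneg _, ?_, ?_⟩
  · have hsw : star w = star ψ ᵥ* U := by
      rw [hw, Matrix.star_mulVec, Matrix.star_eq_conjTranspose, Matrix.conjTranspose_conjTranspose]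
    have : star w ⬝ᵥ w = star ψ ⬝ᵥ ψ := by
      rw [hsw, hw, Matrix.dotProduct_mulVec, Matrix.vecMul_vecMul, hU1, Matrix.vecMul_one]
    have h2 : star w ⬝ᵥ w = ((∑ i, Complex.normSq (w i) : ℝ) : ℂ) := by
      push_cast
      simp only [dotProduct, Pi.star_apply]
      exact Finset.sum_congr rfl fun i _ => by
        rw [Complex.star_def, mul_comm, Complex.mul_conj]
    rw [← this, h2, Complex.ofReal_re]
  · have hAspec : A *ᵥ ψ = U *ᵥ (Matrix.diagonal (RCLike.ofReal ∘ hA.eigenvalues) *ᵥ w) := by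
      nth_rewrite 1 [hA.spectral_theorem]
      rw [Unitary.conjStarAlgAut_apply]
      rw [← Matrix.mulVec_mulVec, ← Matrix.mulVec_mulVec]
    have hsw : star w = star ψ ᵥ* U := by
      rw [hw, Matrix.star_mulVec, Matrix.star_eq_conjTranspose, Matrix.conjTranspose_conjTranspose]
    rw [hAspec, Matrix.dotProduct_mulVec, ← hsw]
    have : star w ⬝ᵥ (Matrix.diagonal (RCLike.ofReal ∘ hA.eigenvalues) *ᵥ w)
        = ∑ i, ((hA.eigenvalues i * Complex.normSq (w i) : ℝ) : ℂ) := by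
      simp only [dotProduct, Matrix.mulVec_diagonal, Pi.star_apply, Function.comp_apply]
      refine Finset.sum_congr rfl fun i _ => ?_
      rw [Complex.star_def, mul_comm, mul_assoc, Complex.mul_conj, Complex.ofReal_mul]
      rfl
    rw [this, Complex.re_sum]
    exact Finset.sum_congr rfl fun i _ => Complex.ofReal_re _

lemma posSemidef_trace_re_nonneg {P : Matrix n n ℂ} (hP : P.PosSemidef) : 0 ≤ P.trace.re := by
  rw [← sum_eigenvalues_eq_trace hP.1]
  exact Finset.sum_nonneg fun i _ => hP.eigenvalues_nonneg i

lemma traceNorm_nonneg' (A : Matrix n n ℂ) : 0 ≤ traceNorm A := by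
  unfold traceNorm
  rw [trace_conj_diag (Matrix.posSemidef_conjTranspose_mul_self A).1, Complex.re_sum]
  exact Finset.sum_nonneg fun i _ => by simp [Real.sqrt_nonneg]

lemma traceDist_nonneg' (A B : Matrix n n ℂ) : 0 ≤ traceDist A B :=
  div_nonneg (traceNorm_nonneg' _) (by norm_num)

end spectral

lemma trace_outer (x : n → ℂ) : (outer x).trace = star x ⬝ᵥ x := by
  rw [outer_eq_ou, trace_ou]

lemma fidelity_le_traceDist {σ : Matrix n n ℂ} (hσ : σ.PosSemidef) (hσt : σ.trace = 1)
    {ψ : n → ℂ} (hψ : star ψ ⬝ᵥ ψ = 1) :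
    1 - (star ψ ⬝ᵥ σ *ᵥ ψ).re ≤ traceDist (outer ψ) σ := by
  set Δ := outer ψ - σ with hΔdef
  have hΔ : Δ.IsHermitian := (ou_hermitian ψ).sub hσ.1
  have htr : Δ.trace = 0 := by
    rw [hΔdef, Matrix.trace_sub, trace_outer, hψ, hσt, sub_self]
  have hsum0 : ∑ i, hΔ.eigenvalues i = 0 := by
    rw [sum_eigenvalues_eq_trace hΔ, htr, Complex.zero_re]
  obtain ⟨t, ht0, ht1, hqf⟩ := quadform_eq hΔ ψ
  rw [hψ, Complex.one_re] at ht1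
  have hv : (star ψ ⬝ᵥ Δ *ᵥ ψ).re = 1 - (star ψ ⬝ᵥ σ *ᵥ ψ).re := by
    rw [hΔdef, Matrix.sub_mulVec, dotProduct_sub, Complex.sub_re]
    congr 2
    rw [outer_eq_ou, ou_mulVec, dotProduct_smul, hψ, smul_eq_mul, mul_one,
      Complex.one_re]
  have key : 1 - (star ψ ⬝ᵥ σ *ᵥ ψ).re ≤ (∑ i, |hΔ.eigenvalues i|) / 2 := by
    rw [← hv, hqf]
    have hle : ∑ i, hΔ.eigenvalues i * t i
        ≤ ∑ i, (|hΔ.eigenvalues i| + hΔ.eigenvalues i) / 2 := by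
      refine Finset.sum_le_sum fun i _ => ?_
      have h1 : t i ≤ 1 := by
        rw [← ht1]
        exact Finset.single_le_sum (fun j _ => ht0 j) (Finset.mem_univ i)
      rcases abs_cases (hΔ.eigenvalues i) with ⟨he, hp⟩ | ⟨he, hp⟩ <;> nlinarith [ht0 i]
    refine hle.trans_eq ?_
    rw [← Finset.sum_div]
    rw [Finset.sum_add_distrib, hsum0, add_zero]
  calc 1 - (star ψ ⬝ᵥ σ *ᵥ ψ).re ≤ (∑ i, |hΔ.eigenvalues i|) / 2 := key
  _ = traceDist (outer ψ) σ := by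
    rw [traceDist, ← hΔdef, traceNorm_of_hermitian hΔ]

lemma posSemidef_real_smul {M : Matrix n n ℂ} (hM : M.PosSemidef) {r : ℝ} (hr : 0 ≤ r) :
    (((r : ℂ)) • M).PosSemidef := by
  refine Matrix.PosSemidef.of_dotProduct_mulVec_nonneg ?_ ?_
  · have h : ((r:ℂ) • M)ᴴ = star (r:ℂ) • Mᴴ := Matrix.conjTranspose_smul _ _
    rw [Matrix.IsHermitian, h, hM.1.eq, Complex.star_def, Complex.conj_ofReal]
  · intro x
    rw [Matrix.smul_mulVec, dotProduct_smul, smul_eq_mul]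
    have h0 : (0:ℂ) ≤ (r:ℂ) := by exact_mod_cast hr
    exact mul_nonneg h0 (hM.dotProduct_mulVec_nonneg x)

lemma traceNorm_zero' : traceNorm (0 : Matrix n n ℂ) = 0 := by
  have h := traceNorm_eq_of_sqrt (A := (0 : Matrix n n ℂ)) (S := (0 : Matrix n n ℂ))
    Matrix.PosSemidef.zero (by simp)
  rw [h, Matrix.trace_zero, Complex.zero_re]

lemma traceDist_outer_le {ψ φ : n → ℂ} (hψ : star ψ ⬝ᵥ ψ = 1) (hφ : star φ ⬝ᵥ φ = 1) :
    traceDist (outer ψ) (outer φ) ≤ Real.sqrt (1 - Complex.normSq (star φ ⬝ᵥ ψ)) := by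
  set c : ℂ := star φ ⬝ᵥ ψ with hc
  set F : ℝ := Complex.normSq c with hF
  set a : ℝ := 1 - F with ha
  have hstarc : star c = star ψ ⬝ᵥ φ := star_dot φ ψ
  have hcc : star c * c = (F : ℂ) := by
    rw [mul_comm, Complex.star_def, Complex.mul_conj, hF]
  set Δ := ou ψ ψ - ou φ φ with hΔdef
  have hΔ : Δ.IsHermitian := (ou_hermitian ψ).sub (ou_hermitian φ)
  have e1 : ou ψ ψ * ou ψ ψ = ou ψ ψ := by rw [ou_mul_ou, hψ, one_smul]
  have e2 : ou φ φ * ou φ φ = ou φ φ := by rw [ou_mul_ou, hφ, one_smul]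
  have e3 : ou ψ ψ * ou φ φ = star c • ou ψ φ := by rw [ou_mul_ou, ← hstarc]
  have e4 : ou φ φ * ou ψ ψ = c • ou φ ψ := by rw [ou_mul_ou, ← hc]
  have e5 : ou ψ φ * ou ψ ψ = c • ou ψ ψ := by rw [ou_mul_ou, ← hc]
  have e6 : ou ψ φ * ou φ φ = ou ψ φ := by rw [ou_mul_ou, hφ, one_smul]
  have e7 : ou φ ψ * ou ψ ψ = ou φ ψ := by rw [ou_mul_ou, hψ, one_smul]
  have e8 : ou φ ψ * ou φ φ = star c • ou φ φ := by rw [ou_mul_ou, ← hstarc]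
  have hΔ2 : Δ * Δ = ou ψ ψ + ou φ φ - star c • ou ψ φ - c • ou φ ψ := by
    rw [hΔdef, sub_mul, mul_sub, mul_sub, e1, e2, e3, e4]
    module
  have hMA : Δ * Δ * ou ψ ψ = (1 - (F:ℂ)) • ou ψ ψ := by
    rw [hΔ2, sub_mul, sub_mul, add_mul, e1, e4, smul_mul_assoc, smul_mul_assoc, e5, e7,
      smul_smul, hcc]
    module
  have hMB : Δ * Δ * ou φ φ = (1 - (F:ℂ)) • ou φ φ := by
    rw [hΔ2, sub_mul, sub_mul, add_mul, e2, e3, smul_mul_assoc, smul_mul_assoc, e6, e8,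
      smul_smul, mul_comm c (star c), hcc]
    module
  have hcube : Δ * Δ * Δ = (1 - (F:ℂ)) • Δ := by
    calc Δ * Δ * Δ = Δ * Δ * (ou ψ ψ) - Δ * Δ * (ou φ φ) := by rw [← mul_sub, ← hΔdef]
    _ = (1 - (F:ℂ)) • Δ := by rw [hMA, hMB, ← smul_sub, hΔdef]
  have htr2 : (Δ * Δ).trace = ((2 * a : ℝ) : ℂ) := by
    rw [hΔ2, Matrix.trace_sub, Matrix.trace_sub, Matrix.trace_add, Matrix.trace_smul,
      Matrix.trace_smul, trace_ou, trace_ou, trace_ou, trace_ou, hψ, hφ, ← hc, ← hstarc,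
      smul_eq_mul, smul_eq_mul, hcc, mul_comm c (star c), hcc]
    push_cast [ha]
    ring
  have hΔsq_psd : (Δ * Δ).PosSemidef := by
    have h := Matrix.posSemidef_conjTranspose_mul_self Δ
    rwa [hΔ.eq] at h
  have hentry : (Δ * Δ).trace = ∑ i, ∑ j, ((Complex.normSq (Δ j i) : ℝ) : ℂ) := by
    have h0 : Δ * Δ = Δᴴ * Δ := by rw [hΔ.eq]
    rw [h0]
    simp only [Matrix.trace, Matrix.diag, Matrix.mul_apply, Matrix.conjTranspose_apply]
    refine Finset.sum_congr rfl fun i _ => Finset.sum_congr rfl fun j _ => ?_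
    rw [Complex.star_def, mul_comm, Complex.mul_conj]
  have ha2 : 2 * a = ∑ i, ∑ j, Complex.normSq (Δ j i) := by
    have h := htr2.symm.trans hentry
    push_cast at h
    have h2 := congrArg Complex.re h
    simpa using h2
  have h0a : 0 ≤ a := by
    have : 0 ≤ 2 * a := by
      rw [ha2]
      exact Finset.sum_nonneg fun i _ => Finset.sum_nonneg fun j _ => Complex.normSq_nonneg _
    linarith
  have hgoal : traceDist (outer ψ) (outer φ) = traceNorm Δ / 2 := by
    rw [traceDist, outer_eq_ou, outer_eq_ou, ← hΔdef]
  rcases eq_or_lt_of_le h0a with h0 | h0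
  · -- a = 0 : Δ = 0
    have hΔ0 : Δ = 0 := by
      ext i j
      have hz : ∑ i, ∑ j, Complex.normSq (Δ j i) = 0 := by rw [← ha2, ← h0, mul_zero]
      have h1 := (Finset.sum_eq_zero_iff_of_nonneg
        (fun i _ => Finset.sum_nonneg fun j _ => Complex.normSq_nonneg _)).mp hz j
        (Finset.mem_univ j)
      have h2 := (Finset.sum_eq_zero_iff_of_nonneg
        (fun j _ => Complex.normSq_nonneg _)).mp h1 i (Finset.mem_univ i)
      simpa using Complex.normSq_eq_zero.mp h2
    rw [hgoal, hΔ0, traceNorm_zero']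
    have := Real.sqrt_nonneg a
    linarith
  · -- a > 0
    set r : ℝ := (Real.sqrt a)⁻¹ with hr
    have hsa : Real.sqrt a ≠ 0 := ne_of_gt (Real.sqrt_pos.mpr h0)
    have hS : (((r:ℂ)) • (Δ * Δ)).PosSemidef :=
      posSemidef_real_smul hΔsq_psd (inv_nonneg.mpr (Real.sqrt_nonneg a))
    have hSsq : (((r:ℂ)) • (Δ * Δ)) ^ 2 = Δᴴ * Δ := by
      have h4 : Δ * Δ * (Δ * Δ) = (1 - (F:ℂ)) • (Δ * Δ) := by
        rw [← mul_assoc, hcube, smul_mul_assoc]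
      have hsc : (r:ℂ) * (r:ℂ) * (1 - (F:ℂ)) = 1 := by
        have h1F : ((a:ℝ):ℂ) = 1 - (F:ℂ) := by rw [ha]; push_cast; ring
        rw [← h1F]
        have : r * r * a = 1 := by
          rw [hr, ← mul_inv, Real.mul_self_sqrt h0a, inv_mul_cancel₀ h0.ne']
        exact_mod_cast this
      rw [pow_two, smul_mul_assoc, mul_smul_comm, h4, smul_smul, smul_smul, hsc, one_smul,
        hΔ.eq]
    have htn : traceNorm Δ = 2 * Real.sqrt a := by
      rw [traceNorm_eq_of_sqrt hS hSsq, Matrix.trace_smul, htr2, smul_eq_mul, ← Complex.ofReal_mul,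
        Complex.ofReal_re, hr]
      field_simp
      nlinarith [Real.mul_self_sqrt h0a]
    rw [hgoal, htn]
    linarith [Real.sqrt_nonneg a]

lemma real_smul_matrix (r : ℝ) (M : Matrix n n ℂ) : r • M = ((r:ℂ)) • M := by
  ext i j
  simp [Complex.real_smul]

lemma unit_dot {ψ : n → ℂ} (h : ∑ i, Complex.normSq (ψ i) = 1) :
    star ψ ⬝ᵥ ψ = 1 := by
  have h2 : star ψ ⬝ᵥ ψ = ∑ i, ((Complex.normSq (ψ i) : ℝ) : ℂ) := by
    simp only [dotProduct, Pi.star_apply]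
    exact Finset.sum_congr rfl fun i _ => by
      rw [Complex.star_def, mul_comm, Complex.mul_conj]
  rw [h2, ← Complex.ofReal_sum, h, Complex.ofReal_one]

lemma fidelity_outer (φ ψ : n → ℂ) :
    (star ψ ⬝ᵥ (outer φ) *ᵥ ψ).re = Complex.normSq (star φ ⬝ᵥ ψ) := by
  rw [outer_eq_ou, ou_mulVec, dotProduct_smul, smul_eq_mul, ← star_dot φ ψ,
    Complex.star_def, Complex.mul_conj, Complex.ofReal_re]

lemma hull_density {s : Set (Matrix n n ℂ)} (hs : ∀ σ ∈ s, σ.PosSemidef ∧ σ.trace = 1) :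
    ∀ σ ∈ convexHull ℝ s, σ.PosSemidef ∧ σ.trace = 1 := by
  have hconv : Convex ℝ {σ : Matrix n n ℂ | σ.PosSemidef ∧ σ.trace = 1} := by
    rintro x ⟨hx1, hx2⟩ y ⟨hy1, hy2⟩ p q hp hq hpq
    constructor
    · show ((p • x + q • y : Matrix n n ℂ)).PosSemidef
      rw [real_smul_matrix, real_smul_matrix]
      exact (posSemidef_real_smul hx1 hp).add (posSemidef_real_smul hy1 hq)
    · show ((p • x + q • y : Matrix n n ℂ)).trace = 1
      rw [real_smul_matrix, real_smul_matrix, Matrix.trace_add, Matrix.trace_smul,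
        Matrix.trace_smul, hx2, hy2, smul_eq_mul, smul_eq_mul, mul_one, mul_one]
      exact_mod_cast hpq
  exact fun σ hσ => convexHull_min (fun x hx => hs x hx) hconv hσ

lemma binEntropy_eq' (t : ℝ) : binEntropy t = Real.binEntropy t / Real.log 2 := by
  simp only [binEntropy, Real.binEntropy, Real.logb, Real.log_inv]
  ring

lemma binEntropy_real (t : ℝ) : Real.binEntropy t = binEntropy t * Real.log 2 := by
  have h2 : Real.log 2 ≠ 0 := ne_of_gt (Real.log_pos (by norm_num))
  rw [binEntropy_eq']
  field_simp

end ConcAux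

open Matrix ConcAux

/-- Concentration near the vertices of a polytope of pure states. -/
theorem concentration_near_vertices {D m : ℕ} (hD : 2 ≤ D) (hm : 1 ≤ m)
    (ψs : Fin m → Fin D → ℂ)
    (hψs : ∀ j, ∑ i, Complex.normSq (ψs j i) = 1) :
    ∃ εStar > (0 : ℝ), ∀ ψ : Fin D → ℂ, (∑ i, Complex.normSq (ψ i)) = 1 →
      ∀ ε : ℝ,
        ε = sInf ((fun σ => traceDist (outer ψ) σ) ''
              convexHull ℝ (Set.range fun j => outer (ψs j))) →
        ε ≤ εStar →
        ∀ lam : ℝ, 1 / 2 ≤ lam → lam ≤ 1 → binEntropy lam = fannesError ε D →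
        ∃ j, traceDist (outer ψ) (outer (ψs j)) ≤ ε + 2 * Real.sqrt (1 - lam) := by
  refine ⟨1/2, by norm_num, ?_⟩
  intro ψ hψ ε hε hεs lam hlam1 hlam2 hent
  have hψu : star ψ ⬝ᵥ ψ = 1 := unit_dot hψ
  have hψsu : ∀ j, star (ψs j) ⬝ᵥ (ψs j) = 1 := fun j => unit_dot (hψs j)
  set K : Set (Matrix (Fin D) (Fin D) ℂ) := Set.range fun j => outer (ψs j) with hK
  have hj0K : outer (ψs ⟨0, hm⟩) ∈ K := ⟨⟨0, hm⟩, rfl⟩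
  have hPne : ((fun σ => traceDist (outer ψ) σ) '' convexHull ℝ K).Nonempty :=
    ⟨_, ⟨_, subset_convexHull ℝ K hj0K, rfl⟩⟩
  have hε0 : 0 ≤ ε := by
    rw [hε]
    refine le_csInf hPne ?_
    rintro b ⟨σ, _, rfl⟩
    exact traceDist_nonneg' _ _
  set Fj : Fin m → ℝ := fun j => Complex.normSq (star (ψs j) ⬝ᵥ ψ) with hFj
  obtain ⟨j0, _, hj0max⟩ :=
    Finset.exists_max_image Finset.univ Fj ⟨⟨0, hm⟩, Finset.mem_univ _⟩
  have hKdm : ∀ σ ∈ K, σ.PosSemidef ∧ σ.trace = 1 := by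
    rintro σ ⟨j, rfl⟩
    exact ⟨outer_posSemidef _, by rw [trace_outer, hψsu j]⟩
  have hPdm := hull_density hKdm
  have hlin : IsLinearMap ℝ (fun σ : Matrix (Fin D) (Fin D) ℂ => (star ψ ⬝ᵥ σ *ᵥ ψ).re) := by
    constructor
    · intro x y
      simp only [Matrix.add_mulVec, dotProduct_add, Complex.add_re]
    · intro r x
      simp only [smul_eq_mul]
      rw [real_smul_matrix, Matrix.smul_mulVec, dotProduct_smul, smul_eq_mul,
        Complex.re_ofReal_mul]
  have hsub : K ⊆ {σ | (star ψ ⬝ᵥ σ *ᵥ ψ).re ≤ Fj j0} := by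
    rintro σ ⟨j, rfl⟩
    show (star ψ ⬝ᵥ (outer (ψs j)) *ᵥ ψ).re ≤ Fj j0
    rw [fidelity_outer]
    exact hj0max j (Finset.mem_univ j)
  have hhalf := convexHull_min hsub (convex_halfSpace_le hlin (Fj j0))
  have hlb : 1 - Fj j0 ≤ ε := by
    rw [hε]
    refine le_csInf hPne ?_
    rintro b ⟨σ, hσ, rfl⟩
    obtain ⟨hσp, hσt⟩ := hPdm σ hσ
    have h1 := fidelity_le_traceDist hσp hσt hψu
    have h2 : (star ψ ⬝ᵥ σ *ᵥ ψ).re ≤ Fj j0 := hhalf hσ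
    linarith
  have hdist := traceDist_outer_le hψu (hψsu j0)
  have hd2 : traceDist (outer ψ) (outer (ψs j0)) ≤ Real.sqrt ε := by
    refine hdist.trans (Real.sqrt_le_sqrt ?_)
    have : Complex.normSq (star (ψs j0) ⬝ᵥ ψ) = Fj j0 := rfl
    rw [this]
    linarith
  -- entropy argument: lam ≤ 1 - ε
  have hlog : 0 ≤ Real.logb 2 ((D:ℝ) - 1) := by
    apply Real.logb_nonneg (by norm_num)
    have : (2:ℝ) ≤ (D:ℝ) := by exact_mod_cast hD
    linarith
  have hfe : binEntropy ε ≤ binEntropy lam := by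
    rw [hent, fannesError]
    nlinarith [mul_nonneg hε0 hlog]
  have hlog2 : 0 < Real.log 2 := Real.log_pos (by norm_num)
  have hmono : Real.binEntropy (1 - ε) ≤ Real.binEntropy lam := by
    rw [Real.binEntropy_one_sub, binEntropy_real, binEntropy_real]
    exact mul_le_mul_of_nonneg_right hfe hlog2.le
  have hlamle : lam ≤ 1 - ε := by
    by_contra hcon
    push_neg at hcon
    have hmem1 : (1 - ε) ∈ Set.Icc (2⁻¹:ℝ) 1 := ⟨by norm_num; linarith, by linarith⟩
    have hmem2 : lam ∈ Set.Icc (2⁻¹:ℝ) 1 := ⟨by norm_num; linarith, hlam2⟩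
    have := Real.binEntropy_strictAntiOn hmem1 hmem2 hcon
    linarith
  refine ⟨j0, ?_⟩
  have hsq : Real.sqrt ε ≤ Real.sqrt (1 - lam) := Real.sqrt_le_sqrt (by linarith)
  have h1lam : 0 ≤ Real.sqrt (1 - lam) := Real.sqrt_nonneg _
  calc traceDist (outer ψ) (outer (ψs j0)) ≤ Real.sqrt ε := hd2
  _ ≤ Real.sqrt (1 - lam) := hsq
  _ ≤ ε + 2 * Real.sqrt (1 - lam) := by linarith
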